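/- arXiv:1901.03747 — 2 statements merged into one kernel-verified Lean document; each statement's English description precedes it below -/
import Mathlib

section
/- Let Σ=(X,𝒰,φ) be a control system with the BIC property. If Σ is UGS and has the bUAG property, then Σ is forward complete and has the UAG property; more precisely, if γ∈K∞∪{0} serves simultaneously as the bUAG gain and as the UGS input gain, and σ∈K∞ is the UGS state bound, then Σ satisfies the UAG property with gain γ+σ. -/
open Set Filter

noncomputable section

/-- Class `K` comparison functions: continuous, strictly increasing on `[0,∞)`, vanishing at `0`. -/
def IsClassK (γ : ℝ → ℝ) : Prop :=
  ContinuousOn γ (Set.Ici 0) ∧ StrictMonoOn γ (Set.Ici 0) ∧ γ 0 = 0 ∧ ∀ r ≥ (0:ℝ), 0 ≤ γ r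

/-- Class `K∞`: unbounded class `K` functions. -/
def IsClassKinf (γ : ℝ → ℝ) : Prop :=
  IsClassK γ ∧ ∀ M : ℝ, ∃ r ≥ (0:ℝ), M < γ r

/-- Class `K ∪ {0}`. -/
def IsClassKZero (γ : ℝ → ℝ) : Prop := IsClassK γ ∨ γ = fun _ => 0

/-- Class `K∞ ∪ {0}`. -/
def IsClassKinfZero (γ : ℝ → ℝ) : Prop := IsClassKinf γ ∨ γ = fun _ => 0

/-- Class `L`: continuous, nonincreasing on `[0,∞)`, converging to `0` at infinity. -/
def IsClassL (γ : ℝ → ℝ) : Prop :=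
  ContinuousOn γ (Set.Ici 0) ∧ AntitoneOn γ (Set.Ici 0) ∧
    Filter.Tendsto γ Filter.atTop (nhds 0) ∧ ∀ r ≥ (0:ℝ), 0 ≤ γ r

/-- Class `KL` functions. -/
def IsClassKL (β : ℝ → ℝ → ℝ) : Prop :=
  (∀ t ≥ (0:ℝ), IsClassK (fun r => β r t)) ∧ (∀ r > (0:ℝ), IsClassL (fun t => β r t))

/-- A normed linear space of inputs: a set of functions `[0,∞) → U` (modeled on `ℝ`),
with a norm, satisfying the axioms of shift invariance and concatenation. -/
structure InputSpace (U : Type*) where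
  carrier : Set (ℝ → U)
  normU : (ℝ → U) → ℝ
  nonempty : carrier.Nonempty
  normU_nonneg : ∀ u ∈ carrier, 0 ≤ normU u
  shift_mem : ∀ u ∈ carrier, ∀ τ ≥ (0:ℝ), (fun t => u (t + τ)) ∈ carrier
  shift_norm : ∀ u ∈ carrier, ∀ τ ≥ (0:ℝ), normU (fun t => u (t + τ)) ≤ normU u
  concat_mem : ∀ u₁ ∈ carrier, ∀ u₂ ∈ carrier, ∀ t > (0:ℝ),
    (fun τ => if τ ≤ t then u₁ τ else u₂ (τ - t)) ∈ carrier

/-- A (possibly not forward complete) control system `Σ = (X, 𝒰, φ)` with transition map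
`flow` defined on a domain `dom ⊆ ℝ₊ × X × 𝒰`, satisfying the identity, causality,
continuity and cocycle axioms. -/
structure ControlSystem (X : Type*) [NormedAddCommGroup X] (U : Type*) where
  inp : InputSpace U
  dom : Set (ℝ × X × (ℝ → U))
  flow : ℝ → X → (ℝ → U) → X
  dom_sub : ∀ p ∈ dom, 0 ≤ p.1 ∧ p.2.2 ∈ inp.carrier
  dom_exists : ∀ x : X, ∀ u ∈ inp.carrier, ∃ t > (0:ℝ), ∀ s ∈ Set.Icc 0 t, (s, x, u) ∈ dom
  identity : ∀ x : X, ∀ u ∈ inp.carrier, flow 0 x u = x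
  causality : ∀ t ≥ (0:ℝ), ∀ x : X, ∀ u ∈ inp.carrier, ∀ v ∈ inp.carrier,
    (t, x, u) ∈ dom → (t, x, v) ∈ dom → (∀ s ∈ Set.Icc 0 t, u s = v s) →
    flow t x u = flow t x v
  cont : ∀ x : X, ∀ u ∈ inp.carrier,
    ContinuousOn (fun t => flow t x u) {t : ℝ | (t, x, u) ∈ dom}
  cocycle : ∀ x : X, ∀ u ∈ inp.carrier, ∀ t ≥ (0:ℝ), ∀ h ≥ (0:ℝ),
    (∀ s ∈ Set.Icc 0 (t + h), (s, x, u) ∈ dom) →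
    flow h (flow t x u) (fun s => u (s + t)) = flow (t + h) x u

namespace ControlSystem

variable {X U : Type*} [NormedAddCommGroup X]

/-- Forward completeness: `φ(t,x,u)` is well defined for all `t ≥ 0`, `x ∈ X`, `u ∈ 𝒰`. -/
def ForwardComplete (S : ControlSystem X U) : Prop :=
  ∀ t ≥ (0:ℝ), ∀ x : X, ∀ u ∈ S.inp.carrier, (t, x, u) ∈ S.dom

/-- The boundedness-implies-continuation property. -/
def BIC (S : ControlSystem X U) : Prop :=
  ∀ x : X, ∀ u ∈ S.inp.carrier,
    (∀ t ≥ (0:ℝ), (t, x, u) ∈ S.dom) ∨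
    ∃ tmax > (0:ℝ),
      (∀ t, 0 ≤ t → t < tmax → (t, x, u) ∈ S.dom) ∧
      (∀ t ≥ tmax, (t, x, u) ∉ S.dom) ∧
      ∀ M > (0:ℝ), ∃ t, 0 ≤ t ∧ t < tmax ∧ M < ‖S.flow t x u‖

/-- Uniform global stability. -/
def UGS (S : ControlSystem X U) : Prop :=
  ∃ σ γ : ℝ → ℝ, IsClassKinf σ ∧ IsClassKinfZero γ ∧
    ∀ t x u, (t, x, u) ∈ S.dom → ‖S.flow t x u‖ ≤ σ ‖x‖ + γ (S.inp.normU u)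

end ControlSystem

namespace ControlSystem

variable {X U : Type*} [NormedAddCommGroup X]

/-- UGS with prescribed state bound `σ` and input gain `γ`. -/
def UGSWith (S : ControlSystem X U) (σ γ : ℝ → ℝ) : Prop :=
  ∀ t x u, (t, x, u) ∈ S.dom → ‖S.flow t x u‖ ≤ σ ‖x‖ + γ (S.inp.normU u)

/-- The bounded input uniform asymptotic gain property with prescribed gain `γ`. -/
def bUAGWith (S : ControlSystem X U) (γ : ℝ → ℝ) : Prop :=
  ∀ ε > (0:ℝ), ∀ r > (0:ℝ), ∃ τ ≥ (0:ℝ),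
    ∀ u ∈ S.inp.carrier, S.inp.normU u ≤ r → ∀ x : X, ‖x‖ ≤ r →
      ∀ t ≥ τ, (t, x, u) ∈ S.dom → ‖S.flow t x u‖ ≤ ε + γ (S.inp.normU u)

/-- The uniform asymptotic gain property with prescribed gain `γ`. -/
def UAGWith (S : ControlSystem X U) (γ : ℝ → ℝ) : Prop :=
  ∀ ε > (0:ℝ), ∀ r > (0:ℝ), ∃ τ ≥ (0:ℝ),
    ∀ u ∈ S.inp.carrier, ∀ x : X, ‖x‖ ≤ r →
      ∀ t ≥ τ, (t, x, u) ∈ S.dom → ‖S.flow t x u‖ ≤ ε + γ (S.inp.normU u)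

end ControlSystem

/-!
Along a trajectory the UGS bound `σ ‖x‖ + γ ‖u‖` is a finite constant, so BIC rules out finite
escape times. For the uniform gain, inputs with `‖u‖ ≤ r` are handled by bUAG; for larger inputs
`‖x‖ ≤ r < ‖u‖`, so the UGS bound is already below `σ ‖u‖ + γ ‖u‖` at every time.
-/

theorem IsClassK.nonneg {γ : ℝ → ℝ} (hγ : IsClassK γ) {r : ℝ} (hr : 0 ≤ r) : 0 ≤ γ r :=
  hγ.2.2.2 r hr

theorem IsClassK.monotoneOn {γ : ℝ → ℝ} (hγ : IsClassK γ) : MonotoneOn γ (Ici 0) :=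
  hγ.2.1.monotoneOn

namespace ControlSystem

variable {X U : Type*} [NormedAddCommGroup X] {S : ControlSystem X U} {σ γ : ℝ → ℝ}

theorem BIC.forwardComplete_of_UGSWith (hBIC : S.BIC) (hUGS : S.UGSWith σ γ) :
    S.ForwardComplete := by
  intro t ht x u hu
  rcases hBIC x u hu with hglobal | ⟨tmax, -, hdom, -, hunbounded⟩
  · exact hglobal t ht
  · obtain ⟨s, hs, hst, hbig⟩ :=
      hunbounded (max 1 (σ ‖x‖ + γ (S.inp.normU u))) (lt_max_of_lt_left one_pos)
    have hbound := hUGS s x u (hdom s hs hst)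
    exact absurd ((le_max_right _ _).trans_lt hbig) hbound.not_gt

theorem UGSWith.uagWith_add (hσ : IsClassK σ) (hUGS : S.UGSWith σ γ) (hbUAG : S.bUAGWith γ) :
    S.UAGWith (fun r => γ r + σ r) := by
  intro ε hε r hr
  obtain ⟨τ, hτ, hdecay⟩ := hbUAG ε hε r hr
  refine ⟨τ, hτ, fun u hu x hx t ht hdom => ?_⟩
  have hu0 := S.inp.normU_nonneg u hu
  rcases le_or_gt (S.inp.normU u) r with hsmall | hlarge
  · have := hdecay u hu hsmall x hx t ht hdom
    have := hσ.nonneg hu0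
    linarith
  · have := hUGS t x u hdom
    have := hσ.monotoneOn (norm_nonneg x) hu0 (hx.trans hlarge.le)
    linarith

end ControlSystem

theorem ugs_and_buag_imply_uag_general {X U : Type*} [NormedAddCommGroup X]
    (S : ControlSystem X U) (hBIC : S.BIC)
    (σ γ : ℝ → ℝ) (hσ : IsClassKinf σ)
    (hUGS : S.UGSWith σ γ) (hbUAG : S.bUAGWith γ) :
    S.ForwardComplete ∧ S.UAGWith (fun r => γ r + σ r) :=
  ⟨hBIC.forwardComplete_of_UGSWith hUGS, hUGS.uagWith_add hσ.1 hbUAG⟩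

/-- If a control system with the BIC property is UGS (with state bound `σ ∈ K∞`
and input gain `γ ∈ K∞ ∪ {0}`) and has the bUAG property with the same gain `γ`, then it is
forward complete and has the UAG property with gain `γ + σ`. -/
theorem ugs_and_buag_imply_uag {X U : Type*} [NormedAddCommGroup X]
    (S : ControlSystem X U) (hBIC : S.BIC)
    (σ γ : ℝ → ℝ) (hσ : IsClassKinf σ) (hγ : IsClassKinfZero γ)
    (hUGS : S.UGSWith σ γ) (hbUAG : S.bUAGWith γ) :
    S.ForwardComplete ∧ S.UAGWith (fun r => γ r + σ r) :=
  ugs_and_buag_imply_uag_general S hBIC σ γ hσ hUGS hbUAG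
end
end

section
/- (UGS small-gain theorem) Let Σᵢ=(Xᵢ,PC([0,∞),X_{≠i})×𝒰,φ̄ᵢ), i=1,…,n, be forward complete control systems, each satisfying the UGS estimate in summation formulation: there exist σᵢ∈K∞ and γᵢⱼ,γᵢ∈K∪{0} (γᵢᵢ=0) such that for all xᵢ∈Xᵢ, all w_{≠i}∈PC([0,∞),X_{≠i}), all u∈𝒰 and all t≥0: ‖φ̄ᵢ(t,xᵢ,(w_{≠i},u))‖_{Xᵢ} ≤ σᵢ(‖xᵢ‖_{Xᵢ}) + Σ_{j≠i}γᵢⱼ(‖wⱼ‖_{[0,t]}) + γᵢ(‖u‖_𝒰). Assume the interconnection Σ=(X,𝒰,φ) of Σ₁,…,Σₙ is a well-defined control system with the BIC property. If the gain operator Γ_⊕ built from Γ=(γᵢⱼ) satisfies the strong small-gain condition, then Σ is forward complete and UGS. -/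
open Set Filter

noncomputable section

/-- Globally bounded, piecewise continuous, right-continuous functions on `[0,∞)`. -/
def PCFun {E : Type*} [NormedAddCommGroup E] (w : ℝ → E) : Prop :=
  (∃ M : ℝ, ∀ t ≥ (0:ℝ), ‖w t‖ ≤ M) ∧
  (∀ t ≥ (0:ℝ), ContinuousWithinAt w (Set.Ici t) t) ∧
  (∀ T > (0:ℝ), ∃ s : Finset ℝ, ContinuousOn w (Set.Icc 0 T \ (s : Set ℝ)))

/-- Supremum of the norm of `w` over a set of times. -/
noncomputable def supNormOn {E : Type*} [NormedAddCommGroup E] (w : ℝ → E) (s : Set ℝ) : ℝ :=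
  sSup ((fun t => ‖w t‖) '' s)

/-- The `i`-th subsystem `Σᵢ = (Xᵢ, PC(ℝ₊, X_{≠i}) × 𝒰, φ̄ᵢ)`: a forward complete control
system whose inputs are pairs of an internal input `w` (a `PC` function with values in the
product of the other state spaces) and an external input `u ∈ 𝒰`. -/
structure Subsystem {n : ℕ} (X : Fin n → Type*) [∀ j, NormedAddCommGroup (X j)]
    (i : Fin n) {U : Type*} (inp : InputSpace U) where
  flow : ℝ → X i → (∀ j : {j : Fin n // j ≠ i}, ℝ → X j.1) → (ℝ → U) → X i
  identity : ∀ x w u, flow 0 x w u = x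
  causality : ∀ t ≥ (0:ℝ), ∀ x : X i,
    ∀ w₁ w₂ : ∀ j : {j : Fin n // j ≠ i}, ℝ → X j.1,
    ∀ u ∈ inp.carrier, ∀ v ∈ inp.carrier,
    (∀ j, ∀ s ∈ Set.Icc 0 t, w₁ j s = w₂ j s) → (∀ s ∈ Set.Icc 0 t, u s = v s) →
    flow t x w₁ u = flow t x w₂ v
  cont : ∀ x : X i, ∀ w : ∀ j : {j : Fin n // j ≠ i}, ℝ → X j.1, ∀ u ∈ inp.carrier,
    (∀ j, PCFun (w j)) → ContinuousOn (fun t => flow t x w u) (Set.Ici 0)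
  cocycle : ∀ x : X i, ∀ w : ∀ j : {j : Fin n // j ≠ i}, ℝ → X j.1, ∀ u ∈ inp.carrier,
    (∀ j, PCFun (w j)) → ∀ t ≥ (0:ℝ), ∀ h ≥ (0:ℝ),
    flow h (flow t x w u) (fun j s => w j (s + t)) (fun s => u (s + t)) = flow (t + h) x w u

/-- Norm of the combined input `(w, u)` of a subsystem:
`‖(w,u)‖ = √(Σ_{j≠i} ‖wⱼ‖∞² + ‖u‖_𝒰²)`. -/
noncomputable def pairNorm {n : ℕ} {X : Fin n → Type*} [∀ j, NormedAddCommGroup (X j)]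
    {i : Fin n} (w : ∀ j : {j : Fin n // j ≠ i}, ℝ → X j.1) (r : ℝ) : ℝ :=
  Real.sqrt ((∑ j : {j : Fin n // j ≠ i}, (supNormOn (w j) (Set.Ici 0)) ^ 2) + r ^ 2)

namespace Subsystem

variable {n : ℕ} {X : Fin n → Type*} [∀ j, NormedAddCommGroup (X j)] {i : Fin n}
  {U : Type*} {inp : InputSpace U}

/-- Input-to-state stability of the subsystem `Σᵢ`, with respect to the norm of the
whole input `(w, u)`. -/
def ISS (S : Subsystem X i inp) : Prop :=
  ∃ β : ℝ → ℝ → ℝ, ∃ γ : ℝ → ℝ, IsClassKL β ∧ IsClassK γ ∧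
    ∀ t ≥ (0:ℝ), ∀ x : X i, ∀ w, (∀ j, PCFun (w j)) → ∀ u ∈ inp.carrier,
      ‖S.flow t x w u‖ ≤ β ‖x‖ t + γ (pairNorm w (inp.normU u))

/-- Uniform global stability of the subsystem `Σᵢ`. -/
def UGS (S : Subsystem X i inp) : Prop :=
  ∃ σ γ : ℝ → ℝ, IsClassKinf σ ∧ IsClassKinfZero γ ∧
    ∀ t ≥ (0:ℝ), ∀ x : X i, ∀ w, (∀ j, PCFun (w j)) → ∀ u ∈ inp.carrier,
      ‖S.flow t x w u‖ ≤ σ ‖x‖ + γ (pairNorm w (inp.normU u))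

/-- The asymptotic gain property of the subsystem `Σᵢ`. -/
def AG (S : Subsystem X i inp) : Prop :=
  ∃ γ : ℝ → ℝ, IsClassKinfZero γ ∧
    ∀ ε > (0:ℝ), ∀ x : X i, ∀ w, (∀ j, PCFun (w j)) → ∀ u ∈ inp.carrier,
      ∃ τ ≥ (0:ℝ), ∀ t ≥ τ, ‖S.flow t x w u‖ ≤ ε + γ (pairNorm w (inp.normU u))

/-- The bounded input uniform asymptotic gain property of the subsystem `Σᵢ`. -/
def bUAG (S : Subsystem X i inp) : Prop :=
  ∃ γ : ℝ → ℝ, IsClassKinfZero γ ∧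
    ∀ ε > (0:ℝ), ∀ r > (0:ℝ), ∃ τ ≥ (0:ℝ),
      ∀ x : X i, ∀ w, (∀ j, PCFun (w j)) → ∀ u ∈ inp.carrier,
        ‖x‖ ≤ r → pairNorm w (inp.normU u) ≤ r →
        ∀ t ≥ τ, ‖S.flow t x w u‖ ≤ ε + γ (pairNorm w (inp.normU u))

end Subsystem

/-- The small-gain condition for an operator `A : ℝⁿ₊ → ℝⁿ₊`:
`A(s) ≱ s` for all `s ∈ ℝⁿ₊ \ {0}`. -/
def SmallGainCond (n : ℕ) (A : (Fin n → ℝ) → (Fin n → ℝ)) : Prop :=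
  ∀ s : Fin n → ℝ, (∀ i, 0 ≤ s i) → s ≠ 0 → ¬ ∀ i, s i ≤ A s i

/-- The strong small-gain condition: `A ∘ D` satisfies the small-gain condition for some
diagonal operator `D(s)ᵢ = sᵢ + αᵢ(sᵢ)` with `αᵢ ∈ K∞`. -/
def StrongSmallGainCond (n : ℕ) (A : (Fin n → ℝ) → (Fin n → ℝ)) : Prop :=
  ∃ α : Fin n → ℝ → ℝ, (∀ i, IsClassKinf (α i)) ∧
    SmallGainCond n (fun s => A (fun i => s i + α i (s i)))

/-- The summation-type gain operator `Γ_⊕` built from a gain matrix. -/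
def gainOpSum (n : ℕ) (γmat : Fin n → Fin n → ℝ → ℝ) : (Fin n → ℝ) → (Fin n → ℝ) :=
  fun s i => ∑ j, γmat i j (s j)

/-- The maximization-type gain operator `Γ_⊗` built from a gain matrix. -/
noncomputable def gainOpMax (n : ℕ) (γmat : Fin n → Fin n → ℝ → ℝ) :
    (Fin n → ℝ) → (Fin n → ℝ) :=
  fun s i => ⨆ j, γmat i j (s j)

/-- The norm on the product state space `X = X₁ × ⋯ × Xₙ`:
`‖x‖_X = √(Σᵢ ‖xᵢ‖²)`. -/
noncomputable def fullNorm {n : ℕ} {X : Fin n → Type*} [∀ j, NormedAddCommGroup (X j)]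
    (x : ∀ j, X j) : ℝ :=
  Real.sqrt (∑ j, ‖x j‖ ^ 2)

/-- A control system on the product state space `X = X₁ × ⋯ × Xₙ`, with a domain of
definition, satisfying the identity, causality, continuity and cocycle axioms;
this models the coupled system `Σ` of the subsystems `Σ₁, …, Σₙ`. -/
structure CoupledSystem {n : ℕ} (X : Fin n → Type*) [∀ j, NormedAddCommGroup (X j)]
    {U : Type*} (inp : InputSpace U) where
  dom : Set (ℝ × (∀ j, X j) × (ℝ → U))
  flow : ℝ → (∀ j, X j) → (ℝ → U) → ∀ j, X j
  dom_sub : ∀ p ∈ dom, 0 ≤ p.1 ∧ p.2.2 ∈ inp.carrier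
  dom_exists : ∀ x : ∀ j, X j, ∀ u ∈ inp.carrier,
    ∃ t > (0:ℝ), ∀ s ∈ Set.Icc 0 t, (s, x, u) ∈ dom
  identity : ∀ x : ∀ j, X j, ∀ u ∈ inp.carrier, flow 0 x u = x
  causality : ∀ t ≥ (0:ℝ), ∀ x : ∀ j, X j, ∀ u ∈ inp.carrier, ∀ v ∈ inp.carrier,
    (t, x, u) ∈ dom → (t, x, v) ∈ dom → (∀ s ∈ Set.Icc 0 t, u s = v s) →
    flow t x u = flow t x v
  cont : ∀ x : ∀ j, X j, ∀ u ∈ inp.carrier, ∀ j,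
    ContinuousOn (fun t => flow t x u j) {t : ℝ | (t, x, u) ∈ dom}
  cocycle : ∀ x : ∀ j, X j, ∀ u ∈ inp.carrier, ∀ t ≥ (0:ℝ), ∀ h ≥ (0:ℝ),
    (∀ s ∈ Set.Icc 0 (t + h), (s, x, u) ∈ dom) →
    flow h (flow t x u) (fun s => u (s + t)) = flow (t + h) x u

namespace CoupledSystem

variable {n : ℕ} {X : Fin n → Type*} [∀ j, NormedAddCommGroup (X j)]
  {U : Type*} {inp : InputSpace U}

/-- `C` is the feedback interconnection of the subsystems `S i`: whenever the solution of the
coupled system exists, its `i`-th component coincides with the trajectory of `Σᵢ` driven by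
the other components as internal inputs and by the external input `u`. -/
def IsInterconnection (C : CoupledSystem X inp) (S : ∀ i, Subsystem X i inp) : Prop :=
  ∀ t x u, (t, x, u) ∈ C.dom → ∀ i : Fin n,
    C.flow t x u i = (S i).flow t (x i) (fun j s => C.flow s x u j.1) u

/-- Forward completeness of the coupled system. -/
def ForwardComplete (C : CoupledSystem X inp) : Prop :=
  ∀ t ≥ (0:ℝ), ∀ x : ∀ j, X j, ∀ u ∈ inp.carrier, (t, x, u) ∈ C.dom

/-- The boundedness-implies-continuation property of the coupled system. -/
def BIC (C : CoupledSystem X inp) : Prop :=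
  ∀ x : ∀ j, X j, ∀ u ∈ inp.carrier,
    (∀ t ≥ (0:ℝ), (t, x, u) ∈ C.dom) ∨
    ∃ tmax > (0:ℝ),
      (∀ t, 0 ≤ t → t < tmax → (t, x, u) ∈ C.dom) ∧
      (∀ t ≥ tmax, (t, x, u) ∉ C.dom) ∧
      ∀ M > (0:ℝ), ∃ t, 0 ≤ t ∧ t < tmax ∧ M < fullNorm (C.flow t x u)

/-- Uniform global stability of the coupled system. -/
def UGS (C : CoupledSystem X inp) : Prop :=
  ∃ σ γ : ℝ → ℝ, IsClassKinf σ ∧ IsClassKinfZero γ ∧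
    ∀ t x u, (t, x, u) ∈ C.dom →
      fullNorm (C.flow t x u) ≤ σ (fullNorm x) + γ (inp.normU u)

/-- Input-to-state stability of the coupled system. -/
def ISS (C : CoupledSystem X inp) : Prop :=
  ∃ β : ℝ → ℝ → ℝ, ∃ γ : ℝ → ℝ, IsClassKL β ∧ IsClassK γ ∧
    ∀ t x u, (t, x, u) ∈ C.dom →
      fullNorm (C.flow t x u) ≤ β (fullNorm x) t + γ (inp.normU u)

/-- The asymptotic gain property of the coupled system. -/
def AG (C : CoupledSystem X inp) : Prop :=
  ∃ γ : ℝ → ℝ, IsClassKinfZero γ ∧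
    ∀ ε > (0:ℝ), ∀ x : ∀ j, X j, ∀ u ∈ inp.carrier, ∃ τ ≥ (0:ℝ),
      ∀ t ≥ τ, fullNorm (C.flow t x u) ≤ ε + γ (inp.normU u)

end CoupledSystem


/-!
Along a solution defined on `[0, T]`, the vector `s` of the sup-norms of its components over
`[0, T]` satisfies `s ≤ Γ_⊕(s) + r`, where `r` depends only on `‖x‖` and `‖u‖`: on `[0, T]` each
component is a trajectory of its subsystem driven by the other components.

The strong small-gain condition turns `s ≤ Γ_⊕(s) + r` into `s ≤ B(r)` for a continuous
nondecreasing `B`. Write `s = θ + α(θ)`. If `r ≤ αᵢ(θᵢ)` wherever `θᵢ ≠ 0`, then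
`θ ≤ Γ_⊕(θ + α(θ))`, so `θ = 0`. Otherwise some `sᵢ` is bounded by a function of `r`; setting
it to zero costs a bounded increase of `r` and shrinks the support, so `n` such steps suffice.

The bound does not depend on `T`, so BIC excludes a finite escape time.
-/

structure IsWeakClassK (g : ℝ → ℝ) : Prop where
  continuousOn : ContinuousOn g (Ici 0)
  monotoneOn : MonotoneOn g (Ici 0)
  map_zero : g 0 = 0
  nonneg : ∀ r ≥ (0:ℝ), 0 ≤ g r

theorem IsClassK.isWeakClassK {g : ℝ → ℝ} (h : IsClassK g) : IsWeakClassK g :=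
  ⟨h.1, h.2.1.monotoneOn, h.2.2.1, h.2.2.2⟩

namespace IsWeakClassK

theorem zero : IsWeakClassK fun _ => 0 :=
  ⟨continuousOn_const, monotoneOn_const, rfl, fun _ _ => le_rfl⟩

theorem id : IsWeakClassK fun r => r :=
  ⟨continuousOn_id, fun _ _ _ _ h => h, rfl, fun _ hr => hr⟩

variable {f g : ℝ → ℝ}

theorem add (hf : IsWeakClassK f) (hg : IsWeakClassK g) : IsWeakClassK fun r => f r + g r :=
  ⟨hf.continuousOn.add hg.continuousOn, hf.monotoneOn.add hg.monotoneOn,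
    by simp [hf.map_zero, hg.map_zero], fun r hr => add_nonneg (hf.nonneg r hr) (hg.nonneg r hr)⟩

theorem comp (hf : IsWeakClassK f) (hg : IsWeakClassK g) : IsWeakClassK fun r => f (g r) :=
  ⟨hf.continuousOn.comp hg.continuousOn hg.nonneg,
    fun _ ha _ hb hab => hf.monotoneOn (hg.nonneg _ ha) (hg.nonneg _ hb) (hg.monotoneOn ha hb hab),
    by simp [hg.map_zero, hf.map_zero], fun r hr => hf.nonneg _ (hg.nonneg r hr)⟩

theorem const_mul (hg : IsWeakClassK g) {c : ℝ} (hc : 0 ≤ c) : IsWeakClassK fun r => c * g r :=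
  ⟨hg.continuousOn.const_smul c,
    fun _ ha _ hb hab => mul_le_mul_of_nonneg_left (hg.monotoneOn ha hb hab) hc,
    by simp [hg.map_zero], fun r hr => mul_nonneg hc (hg.nonneg r hr)⟩

theorem sum {ι : Type*} [Fintype ι] {f : ι → ℝ → ℝ} (hf : ∀ i, IsWeakClassK (f i)) :
    IsWeakClassK fun r => ∑ i, f i r :=
  ⟨continuousOn_finsetSum _ fun i _ => (hf i).continuousOn,
    fun _ ha _ hb hab => Finset.sum_le_sum fun i _ => (hf i).monotoneOn ha hb hab,
    by simp [fun i => (hf i).map_zero], fun r hr => Finset.sum_nonneg fun i _ => (hf i).nonneg r hr⟩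

theorem apply_add_le (hg : IsWeakClassK g) {a b : ℝ} (ha : 0 ≤ a) (hb : 0 ≤ b) :
    g (a + b) ≤ g (2 * a) + g (2 * b) := by
  rcases le_total a b with hab | hab
  · have := hg.monotoneOn (add_nonneg ha hb) (by positivity : (0:ℝ) ≤ 2 * b) (by linarith)
    linarith [hg.nonneg (2 * a) (by positivity)]
  · have := hg.monotoneOn (add_nonneg ha hb) (by positivity : (0:ℝ) ≤ 2 * a) (by linarith)
    linarith [hg.nonneg (2 * b) (by positivity)]

theorem isClassKinf_id_add (hg : IsWeakClassK g) : IsClassKinf fun r => r + g r := by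
  refine ⟨⟨continuousOn_id.add hg.continuousOn, fun a ha b hb hab => ?_, by simp [hg.map_zero],
    fun r hr => add_nonneg hr (hg.nonneg r hr)⟩, fun M => ⟨max M 0 + 1, by positivity, ?_⟩⟩
  · linarith [hg.monotoneOn ha hb hab.le]
  · linarith [le_max_left M 0, hg.nonneg (max M 0 + 1) (by positivity)]

end IsWeakClassK

theorem IsClassKZero.isWeakClassK {g : ℝ → ℝ} (h : IsClassKZero g) : IsWeakClassK g := by
  rcases h with h | rfl
  exacts [h.isWeakClassK, IsWeakClassK.zero]

theorem IsClassKinf.exists_inverse {α : ℝ → ℝ} (hα : IsClassKinf α) :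
    ∃ g : ℝ → ℝ, IsWeakClassK g ∧ ∀ r ≥ (0:ℝ), α (g r) = r := by
  obtain ⟨⟨hcont, hmono, hzero, -⟩, hunbdd⟩ := hα
  -- extend `α` by the identity to an order automorphism of `ℝ`
  set b : ℝ → ℝ := fun r => α (max r 0) + min r 0 with hb
  have hb_of_nonneg : ∀ r, 0 ≤ r → b r = α r := fun r hr => by simp [hb, hr]
  have hb_of_nonpos : ∀ r, r ≤ 0 → b r = r := fun r hr => by simp [hb, hr, hzero]
  have hbcont : Continuous b :=
    (hcont.comp_continuous (continuous_id.max continuous_const) fun r => le_max_right r 0).add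
      (continuous_id.min continuous_const)
  have hbmono : StrictMono b := by
    intro x y hxy
    rcases le_or_gt 0 x with hx | hx
    · rw [hb_of_nonneg x hx, hb_of_nonneg y (hx.trans hxy.le)]
      exact hmono hx (hx.trans hxy.le) hxy
    · have h1 := hmono.monotoneOn (le_max_right x 0) (le_max_right y 0) (max_le_max_right 0 hxy.le)
      have h2 : min x 0 < min y 0 := (min_eq_left hx.le).trans_lt (lt_min hxy hx)
      simp only [hb]
      linarith
  have htop : Tendsto b atTop atTop := by
    refine tendsto_atTop_atTop.2 fun M => ?_
    obtain ⟨r, hr, hMr⟩ := hunbdd M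
    exact ⟨r, fun a ha => (hb_of_nonneg a (hr.trans ha)).symm ▸
      hMr.le.trans (hmono.monotoneOn hr (hr.trans ha) ha)⟩
  have hbot : Tendsto b atBot atBot :=
    tendsto_id.congr' ((eventually_le_atBot 0).mono fun r hr => (hb_of_nonpos r hr).symm)
  let e : ℝ ≃o ℝ := hbmono.orderIsoOfSurjective b (hbcont.surjective htop hbot)
  have he : ∀ r, b (e.symm r) = r := e.apply_symm_apply
  have he_nonneg : ∀ r ≥ (0:ℝ), 0 ≤ e.symm r := fun r hr =>
    hbmono.le_iff_le.1 (by rw [he, hb_of_nonpos 0 le_rfl]; exact hr)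
  refine ⟨e.symm, ⟨e.symm.continuous.continuousOn, e.symm.monotone.monotoneOn _,
    e.symm_apply_eq.2 (hb_of_nonpos 0 le_rfl).symm, he_nonneg⟩, fun r hr => ?_⟩
  rw [← hb_of_nonneg _ (he_nonneg r hr), he]

theorem Fintype.sum_subtype_le_sum {ι : Type*} [Fintype ι] (p : ι → Prop) [DecidablePred p]
    {f : ι → ℝ} (hf : ∀ i, 0 ≤ f i) : ∑ i : Subtype p, f i ≤ ∑ i, f i := by
  rw [← Fintype.sum_subtype_add_sum_subtype p f]
  exact le_add_of_nonneg_right (Finset.sum_nonneg fun i _ => hf i)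

section GainOperator

variable {n : ℕ} {γmat : Fin n → Fin n → ℝ → ℝ}

theorem gainOpSum_nonneg (hγ : ∀ i j, IsWeakClassK (γmat i j)) {s : Fin n → ℝ}
    (hs : ∀ i, 0 ≤ s i) (i : Fin n) : 0 ≤ gainOpSum n γmat s i :=
  Finset.sum_nonneg fun j _ => (hγ i j).nonneg _ (hs j)

theorem gainOpSum_eq_update_zero_add {i k : Fin n} (h0 : γmat i k 0 = 0) (s : Fin n → ℝ) :
    gainOpSum n γmat s i = gainOpSum n γmat (Function.update s k 0) i + γmat i k (s k) := by
  simp only [gainOpSum, Function.apply_update (fun j => γmat i j) s k 0,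
    Finset.sum_update_of_mem (Finset.mem_univ k), h0, zero_add]
  rw [← Finset.sum_erase_add _ _ (Finset.mem_univ k), Finset.sdiff_singleton_eq_erase]

theorem SmallGainCond.eq_zero_of_le_gainOpSum_add {α : Fin n → ℝ → ℝ}
    (hsg : SmallGainCond n fun s => gainOpSum n γmat fun i => s i + α i (s i))
    (hγ : ∀ i j, IsWeakClassK (γmat i j)) {θ s : Fin n → ℝ} {r : ℝ} (hθ : ∀ i, 0 ≤ θ i)
    (hs : ∀ i, 0 ≤ s i) (hθs : ∀ i, θ i + α i (θ i) = s i)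
    (hle : ∀ i, s i ≤ gainOpSum n γmat s i + r) (hr : ∀ i, θ i ≠ 0 → r ≤ α i (θ i)) :
    θ = 0 := by
  have hθs' : (fun i => θ i + α i (θ i)) = s := funext hθs
  by_contra hne
  refine hsg θ hθ hne fun i => ?_
  simp only [hθs']
  by_cases hi : θ i = 0
  · exact hi ▸ gainOpSum_nonneg hγ hs i
  · linarith [hle i, hr i hi, hθs i]

theorem le_gainOpSum_update_zero_add (hγ : ∀ i j, IsWeakClassK (γmat i j)) {s : Fin n → ℝ}
    (hs : ∀ i, 0 ≤ s i) {r a : ℝ} (hle : ∀ i, s i ≤ gainOpSum n γmat s i + r) {k : Fin n}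
    (hk : s k ≤ a) (i : Fin n) :
    Function.update s k 0 i ≤
      gainOpSum n γmat (Function.update s k 0) i + (r + ∑ p, ∑ q, γmat p q a) := by
  have ha : 0 ≤ a := (hs k).trans hk
  have hγa : γmat i k (s k) ≤ ∑ p, ∑ q, γmat p q a :=
    calc γmat i k (s k) ≤ γmat i k a := (hγ i k).monotoneOn (hs k) ha hk
      _ ≤ ∑ q, γmat i q a :=
          Finset.single_le_sum (fun q _ => (hγ i q).nonneg a ha) (Finset.mem_univ k)
      _ ≤ ∑ p, ∑ q, γmat p q a := Finset.single_le_sum (f := fun p => ∑ q, γmat p q a)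
          (fun p _ => Finset.sum_nonneg fun q _ => (hγ p q).nonneg a ha) (Finset.mem_univ i)
  have hsi : s i ≤ gainOpSum n γmat (Function.update s k 0) i + (r + ∑ p, ∑ q, γmat p q a) := by
    linarith [hle i, gainOpSum_eq_update_zero_add (hγ i k).map_zero s (i := i)]
  rcases eq_or_ne i k with rfl | hik
  · exact (Function.update_self i 0 s).symm ▸ (hs i).trans hsi
  · rwa [Function.update_of_ne hik]

def iterBound (c ρ : ℝ → ℝ) : ℕ → ℝ → ℝ
  | 0 => fun _ => 0
  | k + 1 => fun r => c r + iterBound c ρ k (ρ r)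

theorem IsWeakClassK.iterBound {c ρ : ℝ → ℝ} (hc : IsWeakClassK c) (hρ : IsWeakClassK ρ) :
    ∀ k, IsWeakClassK (iterBound c ρ k)
  | 0 => IsWeakClassK.zero
  | k + 1 => hc.add ((IsWeakClassK.iterBound hc hρ k).comp hρ)

theorem le_iterBound_of_le_gainOpSum_add {α : Fin n → ℝ → ℝ} {c : ℝ → ℝ}
    (hγ : ∀ i j, IsWeakClassK (γmat i j)) (hα : ∀ i, IsWeakClassK (α i))
    (hsg : SmallGainCond n fun s => gainOpSum n γmat fun i => s i + α i (s i))
    (hc : IsWeakClassK c) (hcα : ∀ i, ∀ θ ≥ (0:ℝ), ∀ r ≥ (0:ℝ), α i θ < r → θ + α i θ ≤ c r)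
    (k : ℕ) (I : Finset (Fin n)) (hI : I.card ≤ k) {r : ℝ} (hr : 0 ≤ r) {s : Fin n → ℝ}
    (hs : ∀ i, 0 ≤ s i) (hsI : ∀ i ∉ I, s i = 0) (hle : ∀ i, s i ≤ gainOpSum n γmat s i + r)
    (i : Fin n) : s i ≤ iterBound c (fun r => r + ∑ p, ∑ q, γmat p q (c r)) k r := by
  set ρ : ℝ → ℝ := fun r => r + ∑ p, ∑ q, γmat p q (c r)
  have hρ : IsWeakClassK ρ :=
    IsWeakClassK.id.add (IsWeakClassK.sum fun p => IsWeakClassK.sum fun q => (hγ p q).comp hc)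
  induction k generalizing I r s with
  | zero =>
    obtain rfl : I = ∅ := Finset.card_eq_zero.1 (Nat.le_zero.1 hI)
    exact (hsI i (Finset.notMem_empty i)).le
  | succ k ih =>
    choose D hD hDα using fun j => (hα j).isClassKinf_id_add.exists_inverse
    set θ : Fin n → ℝ := fun j => D j (s j)
    have hθ : ∀ j, 0 ≤ θ j := fun j => (hD j).nonneg _ (hs j)
    have hθs : ∀ j, θ j + α j (θ j) = s j := fun j => hDα j _ (hs j)
    have hbound_nonneg := (hc.iterBound hρ k).nonneg (ρ r) (hρ.nonneg r hr)
    show s i ≤ c r + iterBound c ρ k (ρ r)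
    by_cases hlarge : ∀ j, θ j ≠ 0 → r ≤ α j (θ j)
    · have hθ0 := hsg.eq_zero_of_le_gainOpSum_add hγ hθ hs hθs hle hlarge
      have hsi := hθs i
      rw [hθ0, Pi.zero_apply, (hα i).map_zero, add_zero] at hsi
      linarith [hc.nonneg r hr]
    push Not at hlarge
    obtain ⟨k₀, hθk₀, hαk₀⟩ := hlarge
    have hsk₀ : s k₀ ≤ c r := hθs k₀ ▸ hcα k₀ _ (hθ k₀) r hr hαk₀
    have hk₀I : k₀ ∈ I := by
      by_contra hk₀
      exact hθk₀ (by simp only [θ, hsI k₀ hk₀, (hD k₀).map_zero])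
    have hs' : ∀ j, 0 ≤ Function.update s k₀ 0 j := fun j => by
      rcases eq_or_ne j k₀ with rfl | hj <;> simp [*]
    have ih' := ih (I.erase k₀) (by rw [Finset.card_erase_of_mem hk₀I]; omega)
      (hρ.nonneg r hr) hs'
      (fun j hj => by
        rcases eq_or_ne j k₀ with rfl | hjk
        · exact Function.update_self _ _ _
        · rw [Function.update_of_ne hjk]
          exact hsI j fun hjI => hj (Finset.mem_erase.2 ⟨hjk, hjI⟩))
      (le_gainOpSum_update_zero_add hγ hs hle hsk₀)
    rcases eq_or_ne i k₀ with rfl | hik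
    · linarith
    · rw [Function.update_of_ne hik] at ih'
      linarith [hc.nonneg r hr]

end GainOperator

theorem StrongSmallGainCond.exists_bound {n : ℕ} {γmat : Fin n → Fin n → ℝ → ℝ}
    (hsg : StrongSmallGainCond n (gainOpSum n γmat)) (hγ : ∀ i j, IsWeakClassK (γmat i j)) :
    ∃ B : ℝ → ℝ, IsWeakClassK B ∧ ∀ r ≥ (0:ℝ), ∀ s : Fin n → ℝ, (∀ i, 0 ≤ s i) →
      (∀ i, s i ≤ gainOpSum n γmat s i + r) → ∀ i, s i ≤ B r := by
  obtain ⟨α, hα, hsgα⟩ := hsg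
  choose αinv hαinv hααinv using fun i => (hα i).exists_inverse
  set c : ℝ → ℝ := fun r => r + ∑ i, αinv i r
  have hc : IsWeakClassK c := IsWeakClassK.id.add (IsWeakClassK.sum hαinv)
  have hcα : ∀ i, ∀ θ ≥ (0:ℝ), ∀ r ≥ (0:ℝ), α i θ < r → θ + α i θ ≤ c r := by
    intro i θ hθ r hr hαθ
    have hθr : θ ≤ αinv i r := by
      by_contra! h
      linarith [hααinv i r hr, (hα i).1.2.1.monotoneOn ((hαinv i).nonneg r hr) hθ h.le]
    have : αinv i r ≤ ∑ j, αinv j r :=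
      Finset.single_le_sum (fun j _ => (hαinv j).nonneg r hr) (Finset.mem_univ i)
    linarith
  exact ⟨_, hc.iterBound (IsWeakClassK.id.add (IsWeakClassK.sum fun p =>
      IsWeakClassK.sum fun q => (hγ p q).comp hc)) n,
    fun r hr s hs hle => le_iterBound_of_le_gainOpSum_add hγ (fun i => (hα i).1.isWeakClassK)
      hsgα hc hcα n Finset.univ (by simp) hr hs (fun i hi => absurd (Finset.mem_univ i) hi) hle⟩

section SupNorm

variable {E : Type*} [NormedAddCommGroup E]

theorem supNormOn_nonneg (w : ℝ → E) (s : Set ℝ) : 0 ≤ supNormOn w s :=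
  Real.sSup_nonneg fun _ ⟨_, _, h⟩ => h ▸ norm_nonneg _

theorem norm_le_supNormOn {w : ℝ → E} {s : Set ℝ} (hw : BddAbove ((fun t => ‖w t‖) '' s))
    {t : ℝ} (ht : t ∈ s) : ‖w t‖ ≤ supNormOn w s :=
  le_csSup hw ⟨t, ht, rfl⟩

theorem supNormOn_le {w : ℝ → E} {s : Set ℝ} (hs : s.Nonempty) {M : ℝ}
    (hM : ∀ t ∈ s, ‖w t‖ ≤ M) : supNormOn w s ≤ M :=
  csSup_le (hs.image _) fun _ ⟨t, ht, h⟩ => h ▸ hM t ht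

theorem ContinuousOn.pcFun_comp_min {f : ℝ → E} {T : ℝ} (hT : 0 ≤ T)
    (hf : ContinuousOn f (Icc 0 T)) : PCFun fun s => f (min s T) := by
  have hmaps : MapsTo (fun s => min s T) (Ici 0) (Icc 0 T) :=
    fun s hs => ⟨le_min hs hT, min_le_right s T⟩
  have hcont : ContinuousOn (fun s => f (min s T)) (Ici 0) :=
    hf.comp (continuous_id.min continuous_const).continuousOn hmaps
  obtain ⟨M, hM⟩ := isCompact_Icc.bddAbove_image hf.norm
  exact ⟨⟨M, fun t ht => hM ⟨_, hmaps ht, rfl⟩⟩,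
    fun t ht => (hcont t ht).mono (Ici_subset_Ici.2 ht),
    fun _ _ => ⟨∅, hcont.mono fun _ ha => ha.1.1⟩⟩

end SupNorm

section FullNorm

variable {n : ℕ} {X : Fin n → Type*} [∀ j, NormedAddCommGroup (X j)]

theorem fullNorm_nonneg (x : ∀ j, X j) : 0 ≤ fullNorm x :=
  Real.sqrt_nonneg _

theorem norm_le_fullNorm (x : ∀ j, X j) (i : Fin n) : ‖x i‖ ≤ fullNorm x :=
  Real.le_sqrt_of_sq_le (Finset.single_le_sum (f := fun j => ‖x j‖ ^ 2)
    (fun _ _ => sq_nonneg _) (Finset.mem_univ i))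

theorem fullNorm_le {x : ∀ j, X j} {M : ℝ} (hM : 0 ≤ M) (hx : ∀ i, ‖x i‖ ≤ M) :
    fullNorm x ≤ Real.sqrt n * M := by
  calc fullNorm x ≤ Real.sqrt (∑ _i : Fin n, M ^ 2) :=
        Real.sqrt_le_sqrt (Finset.sum_le_sum fun i _ => pow_le_pow_left₀ (norm_nonneg _) (hx i) 2)
    _ = Real.sqrt n * M := by
        rw [Finset.sum_const, Finset.card_univ, Fintype.card_fin, nsmul_eq_mul,
          Real.sqrt_mul (Nat.cast_nonneg n), Real.sqrt_sq hM]

end FullNorm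

def Subsystem.UGSSumEstimate {n : ℕ} {X : Fin n → Type*} [∀ j, NormedAddCommGroup (X j)]
    {i : Fin n} {U : Type*} {inp : InputSpace U} (S : Subsystem X i inp) (σ : ℝ → ℝ)
    (γ : Fin n → ℝ → ℝ) (γext : ℝ → ℝ) : Prop :=
  ∀ x : X i, ∀ w, (∀ j, PCFun (w j)) → ∀ u ∈ inp.carrier, ∀ t ≥ (0:ℝ),
    ‖S.flow t x w u‖ ≤ σ ‖x‖ + (∑ j : {j : Fin n // j ≠ i}, γ j.1 (supNormOn (w j) (Icc 0 t)))
      + γext (inp.normU u)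

namespace CoupledSystem

variable {n : ℕ} {X : Fin n → Type*} [∀ j, NormedAddCommGroup (X j)] {U : Type*}
  {inp : InputSpace U} {C : CoupledSystem X inp} {x : ∀ j, X j} {u : ℝ → U} {t T : ℝ}

theorem BIC.mem_dom_of_mem_Icc (hBIC : C.BIC) (hT : (T, x, u) ∈ C.dom) (ht : t ∈ Icc 0 T) :
    (t, x, u) ∈ C.dom := by
  rcases hBIC x u (C.dom_sub _ hT).2 with hall | ⟨tmax, -, hlt, hge, -⟩
  · exact hall t ht.1
  · exact hlt t ht.1 (ht.2.trans_lt (not_le.1 fun h => hge T h hT))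

theorem BIC.continuousOn_flow (hBIC : C.BIC) (hT : (T, x, u) ∈ C.dom) (j : Fin n) :
    ContinuousOn (fun t => C.flow t x u j) (Icc 0 T) :=
  (C.cont x u (C.dom_sub _ hT).2 j).mono fun _ ht => hBIC.mem_dom_of_mem_Icc hT ht

theorem BIC.norm_flow_le_supNormOn (hBIC : C.BIC) (hT : (T, x, u) ∈ C.dom) (j : Fin n)
    (ht : t ∈ Icc 0 T) :
    ‖C.flow t x u j‖ ≤ supNormOn (fun t => C.flow t x u j) (Icc 0 T) :=
  norm_le_supNormOn (isCompact_Icc.bddAbove_image (hBIC.continuousOn_flow hT j).norm) ht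

theorem BIC.forwardComplete (hBIC : C.BIC) (hbdd : ∀ x, ∀ u ∈ inp.carrier, ∃ M : ℝ,
    ∀ t, (t, x, u) ∈ C.dom → fullNorm (C.flow t x u) ≤ M) : C.ForwardComplete := by
  intro t ht x u hu
  obtain ⟨M, hM⟩ := hbdd x u hu
  rcases hBIC x u hu with hall | ⟨tmax, -, hlt, -, hblowup⟩
  · exact hall t ht
  · obtain ⟨τ, hτ0, hτ, hMτ⟩ := hblowup (max M 0 + 1) (by positivity)
    linarith [hM τ (hlt τ hτ0 hτ), le_max_left M 0]

variable {S : ∀ i, Subsystem X i inp}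

theorem IsInterconnection.flow_eq (hic : C.IsInterconnection S) (hBIC : C.BIC)
    (hT : (T, x, u) ∈ C.dom) (ht : t ∈ Icc 0 T) (i : Fin n) :
    C.flow t x u i = (S i).flow t (x i) (fun j s => C.flow (min s T) x u j.1) u := by
  have hu := (C.dom_sub _ hT).2
  rw [hic t x u (hBIC.mem_dom_of_mem_Icc hT ht) i]
  exact (S i).causality t ht.1 _ _ _ u hu u hu
    (fun j s hs => by rw [min_eq_left (hs.2.trans ht.2)]) fun _ _ => rfl

variable {σ : Fin n → ℝ → ℝ} {γmat : Fin n → Fin n → ℝ → ℝ} {γext : Fin n → ℝ → ℝ}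

theorem IsInterconnection.supNormOn_flow_le (hic : C.IsInterconnection S) (hBIC : C.BIC)
    (hγ : ∀ i j, IsWeakClassK (γmat i j))
    (hest : ∀ i, (S i).UGSSumEstimate (σ i) (γmat i) (γext i))
    (hT : (T, x, u) ∈ C.dom) (i : Fin n) :
    supNormOn (fun t => C.flow t x u i) (Icc 0 T) ≤
      gainOpSum n γmat (fun j => supNormOn (fun t => C.flow t x u j) (Icc 0 T)) i
        + (σ i ‖x i‖ + γext i (inp.normU u)) := by
  obtain ⟨hT0, hu⟩ := C.dom_sub _ hT
  set sn : Fin n → ℝ := fun j => supNormOn (fun t => C.flow t x u j) (Icc 0 T)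
  have hsn : ∀ j, 0 ≤ sn j := fun j => supNormOn_nonneg _ _
  -- the other components, frozen after time `T`, form an admissible internal input
  set w : ∀ j : {j : Fin n // j ≠ i}, ℝ → X j.1 := fun j s => C.flow (min s T) x u j.1
  have hw : ∀ j, PCFun (w j) := fun j => (hBIC.continuousOn_flow hT j.1).pcFun_comp_min hT0
  have hwsn : ∀ j, ∀ τ ∈ Icc 0 T, supNormOn (w j) (Icc 0 τ) ≤ sn j := fun j τ hτ =>
    supNormOn_le (nonempty_Icc.2 hτ.1) fun s hs =>
      hBIC.norm_flow_le_supNormOn hT j.1 ⟨le_min hs.1 hT0, min_le_right s T⟩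
  refine supNormOn_le (nonempty_Icc.2 hT0) fun τ hτ => ?_
  rw [hic.flow_eq hBIC hT hτ i]
  calc ‖(S i).flow τ (x i) w u‖
      ≤ σ i ‖x i‖ + (∑ j : {j : Fin n // j ≠ i}, γmat i j.1 (supNormOn (w j) (Icc 0 τ)))
        + γext i (inp.normU u) := hest i (x i) w hw u hu τ hτ.1
    _ ≤ σ i ‖x i‖ + (∑ j : {j : Fin n // j ≠ i}, γmat i j.1 (sn j)) + γext i (inp.normU u) := by
        gcongr with j
        exact (hγ i j).monotoneOn (supNormOn_nonneg _ _) (hsn j) (hwsn j τ hτ)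
    _ ≤ σ i ‖x i‖ + gainOpSum n γmat sn i + γext i (inp.normU u) := by
        gcongr
        exact Fintype.sum_subtype_le_sum _ fun j => (hγ i j).nonneg _ (hsn j)
    _ = gainOpSum n γmat sn i + (σ i ‖x i‖ + γext i (inp.normU u)) := by ring

theorem IsInterconnection.fullNorm_flow_le (hic : C.IsInterconnection S) (hBIC : C.BIC)
    (hσ : ∀ i, IsWeakClassK (σ i)) (hγ : ∀ i j, IsWeakClassK (γmat i j))
    (hγext : ∀ i, IsWeakClassK (γext i))
    (hest : ∀ i, (S i).UGSSumEstimate (σ i) (γmat i) (γext i)) {B : ℝ → ℝ}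
    (hB : IsWeakClassK B) (hBsg : ∀ r ≥ (0:ℝ), ∀ s : Fin n → ℝ, (∀ i, 0 ≤ s i) →
      (∀ i, s i ≤ gainOpSum n γmat s i + r) → ∀ i, s i ≤ B r)
    (ht : (t, x, u) ∈ C.dom) :
    fullNorm (C.flow t x u) ≤ Real.sqrt n * B (2 * ∑ k, σ k (fullNorm x))
      + Real.sqrt n * B (2 * ∑ k, γext k (inp.normU u)) := by
  obtain ⟨ht0, hu⟩ := C.dom_sub _ ht
  set p := ∑ k, σ k (fullNorm x)
  set q := ∑ k, γext k (inp.normU u)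
  have hx0 := fullNorm_nonneg x
  have hu0 := inp.normU_nonneg u hu
  have hp : 0 ≤ p := (IsWeakClassK.sum hσ).nonneg _ hx0
  have hq : 0 ≤ q := (IsWeakClassK.sum hγext).nonneg _ hu0
  have hoffset : ∀ i, σ i ‖x i‖ + γext i (inp.normU u) ≤ p + q := fun i => add_le_add
    (((hσ i).monotoneOn (norm_nonneg _) hx0 (norm_le_fullNorm x i)).trans
      (Finset.single_le_sum (fun k _ => (hσ k).nonneg _ hx0) (Finset.mem_univ i)))
    (Finset.single_le_sum (fun k _ => (hγext k).nonneg _ hu0) (Finset.mem_univ i))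
  have hsup := hBsg (p + q) (add_nonneg hp hq) _ (fun j => supNormOn_nonneg _ _) fun i =>
    (hic.supNormOn_flow_le hBIC hγ hest ht i).trans (by linarith [hoffset i])
  calc fullNorm (C.flow t x u) ≤ Real.sqrt n * B (p + q) :=
        fullNorm_le (hB.nonneg _ (add_nonneg hp hq)) fun i =>
          (hBIC.norm_flow_le_supNormOn ht i ⟨ht0, le_rfl⟩).trans (hsup i)
    _ ≤ Real.sqrt n * (B (2 * p) + B (2 * q)) := by gcongr; exact hB.apply_add_le hp hq
    _ = _ := mul_add _ _ _

end CoupledSystem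

theorem ugs_small_gain_theorem_general
    {n : ℕ} {X : Fin n → Type*} [∀ j, NormedAddCommGroup (X j)]
    {U : Type*} {inp : InputSpace U}
    (S : ∀ i, Subsystem X i inp) (C : CoupledSystem X inp)
    (σ : Fin n → ℝ → ℝ) (γmat : Fin n → Fin n → ℝ → ℝ) (γext : Fin n → ℝ → ℝ)
    (hσ : ∀ i, IsClassKinf (σ i))
    (hγmat : ∀ i j, IsClassKZero (γmat i j))
    (hγext : ∀ i, IsClassKZero (γext i))
    (hUGSest : ∀ i : Fin n, ∀ x : X i, ∀ w, (∀ j, PCFun (w j)) → ∀ u ∈ inp.carrier,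
      ∀ t ≥ (0:ℝ),
        ‖(S i).flow t x w u‖ ≤ σ i ‖x‖
          + (∑ j : {j : Fin n // j ≠ i}, γmat i j.1 (supNormOn (w j) (Set.Icc 0 t)))
          + γext i (inp.normU u))
    (hic : C.IsInterconnection S) (hBIC : C.BIC)
    (hsg : StrongSmallGainCond n (gainOpSum n γmat)) :
    C.ForwardComplete ∧ C.UGS := by
  have hσ' : ∀ i, IsWeakClassK (σ i) := fun i => (hσ i).1.isWeakClassK
  have hγ : ∀ i j, IsWeakClassK (γmat i j) := fun i j => (hγmat i j).isWeakClassK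
  have hγext' : ∀ i, IsWeakClassK (γext i) := fun i => (hγext i).isWeakClassK
  obtain ⟨B, hB, hBsg⟩ := hsg.exists_bound hγ
  have hbound := fun t x u (ht : (t, x, u) ∈ C.dom) =>
    hic.fullNorm_flow_le hBIC hσ' hγ hγext' hUGSest hB hBsg ht
  have hgain : ∀ {g : Fin n → ℝ → ℝ}, (∀ i, IsWeakClassK (g i)) →
      IsClassKinf fun a => a + Real.sqrt n * B (2 * ∑ k, g k a) := fun hg =>
    ((hB.comp ((IsWeakClassK.sum hg).const_mul zero_le_two)).const_mul
      (Real.sqrt_nonneg n)).isClassKinf_id_add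
  refine ⟨hBIC.forwardComplete fun x u _ => ⟨_, fun t ht => hbound t x u ht⟩,
    _, _, hgain hσ', Or.inl (hgain hγext'), fun t x u ht => ?_⟩
  linarith [hbound t x u ht, fullNorm_nonneg x, inp.normU_nonneg u (C.dom_sub _ ht).2]

/-- **UGS small-gain theorem.** If each forward complete subsystem `Σᵢ`
satisfies a UGS estimate in summation formulation, the interconnection `Σ` is a well-defined
control system with the BIC property, and the gain operator `Γ_⊕` satisfies the strong
small-gain condition, then `Σ` is forward complete and UGS. -/
theorem ugs_small_gain_theorem
    {n : ℕ} {X : Fin n → Type*} [∀ j, NormedAddCommGroup (X j)]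
    {U : Type*} {inp : InputSpace U}
    (S : ∀ i, Subsystem X i inp) (C : CoupledSystem X inp)
    (σ : Fin n → ℝ → ℝ) (γmat : Fin n → Fin n → ℝ → ℝ) (γext : Fin n → ℝ → ℝ)
    (hσ : ∀ i, IsClassKinf (σ i))
    (hγmat : ∀ i j, IsClassKZero (γmat i j))
    (hdiag : ∀ i, γmat i i = fun _ => 0)
    (hγext : ∀ i, IsClassKZero (γext i))
    (hUGSest : ∀ i : Fin n, ∀ x : X i, ∀ w, (∀ j, PCFun (w j)) → ∀ u ∈ inp.carrier,
      ∀ t ≥ (0:ℝ),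
        ‖(S i).flow t x w u‖ ≤ σ i ‖x‖
          + (∑ j : {j : Fin n // j ≠ i}, γmat i j.1 (supNormOn (w j) (Set.Icc 0 t)))
          + γext i (inp.normU u))
    (hic : C.IsInterconnection S) (hBIC : C.BIC)
    (hsg : StrongSmallGainCond n (gainOpSum n γmat)) :
    C.ForwardComplete ∧ C.UGS :=
  ugs_small_gain_theorem_general S C σ γmat γext hσ hγmat hγext hUGSest hic hBIC hsg
end
end
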